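/- Let (M,⊗,1,σ) be a symmetric monoidal category with equalizers and coequalizers that are preserved by the functors X⊗(−) and (−)⊗X for every object X, and let i:K→A be a monomorphism in Hopf_coc(M). Then i is left normal if and only if i is right normal. Explicitly: there exists ψ: A⊗K→K in M with i∘ψ = ad_A∘(Id_A⊗i) if and only if there exists ψ': K⊗A→K in M with i∘ψ' = ad'_A∘(i⊗Id_A). -/

import Mathlib

/-!
Common infrastructure for formalizing results on cocommutative Hopf monoids
in (abelian) symmetric monoidal categories.
-/

open CategoryTheory MonoidalCategory CategoryTheory.Limits

universe v u

namespace HopfSemiabelian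

variable {C : Type u} [Category.{v} C] [MonoidalCategory.{v} C]

section HopfBasics
variable [BraidedCategory C]

/-- The underlying object in `C` of a Hopf monoid. -/
abbrev hCar (H : Hopf C) : C := H.X
/-- The multiplication of a Hopf monoid. -/
abbrev hMul (H : Hopf C) : hCar H ⊗ hCar H ⟶ hCar H := MonObj.mul (X := hCar H)
/-- The unit of a Hopf monoid. -/
abbrev hOne (H : Hopf C) : 𝟙_ C ⟶ hCar H := MonObj.one (X := hCar H)
/-- The comultiplication of a Hopf monoid. -/
abbrev hComul (H : Hopf C) : hCar H ⟶ hCar H ⊗ hCar H := ComonObj.comul (X := hCar H)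
/-- The counit of a Hopf monoid. -/
abbrev hCounit (H : Hopf C) : hCar H ⟶ 𝟙_ C := ComonObj.counit (X := hCar H)
/-- The antipode of a Hopf monoid. -/
abbrev hS (H : Hopf C) : hCar H ⟶ hCar H := HopfObj.antipode (X := hCar H)

/-- The underlying comonoid in `C` of a Hopf monoid. -/
def hComon (H : Hopf C) : Comon C where
  X := hCar H
  comon := inferInstance

/-- The underlying monoid of a Hopf monoid. -/
abbrev hMon (H : Hopf C) : Mon C := Mon.mk (hCar H)

/-- A Hopf monoid is cocommutative if `σ ∘ Δ = Δ`. -/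
def IsCocomm (H : Hopf C) : Prop := hComul H ≫ (β_ (hCar H) (hCar H)).hom = hComul H

variable (C) in
/-- `Hopf_coc(M)`: the category of cocommutative Hopf monoids in `C`,
as a full subcategory of `Hopf_ C` (morphisms are bimonoid morphisms). -/
def HopfCoc := ObjectProperty.FullSubcategory (fun H : Hopf C => IsCocomm H)

instance : Category (HopfCoc C) := ObjectProperty.FullSubcategory.category _

/-- The underlying morphism in `C` of a morphism of cocommutative Hopf monoids. -/
def uhom {K A : HopfCoc C} (f : K ⟶ A) : hCar K.obj ⟶ hCar A.obj := f.hom.hom.hom.hom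

/-- The underlying morphism in `C` of a morphism of Hopf monoids. -/
def uhomH {K A : Hopf C} (f : K ⟶ A) : hCar K ⟶ hCar A := f.hom.hom.hom

/-- The zero morphism between two Hopf monoids (factoring through the trivial one). -/
def hzero (A B : Hopf C) : A ⟶ B :=
  InducedCategory.homMk (Bimon.toTrivial A.toBimon ≫ Bimon.trivialTo B.toBimon)

/-- The zero morphism between two cocommutative Hopf monoids. -/
def zeroH (A B : HopfCoc C) : A ⟶ B := InducedCategory.homMk (hzero A.obj B.obj)

end HopfBasics

section Adjoint
variable [BraidedCategory C]

/-- The adjoint morphism `ad = m(m ⊗ S)(Id ⊗ σ)(Δ ⊗ Id) : A ⊗ A ⟶ A`. -/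
def adOf {A : C} (m : A ⊗ A ⟶ A) (Δ : A ⟶ A ⊗ A) (S : A ⟶ A) : A ⊗ A ⟶ A :=
  (Δ ▷ A) ≫ (α_ A A A).hom ≫ (A ◁ (β_ A A).hom) ≫ (α_ A A A).inv ≫ (m ⊗ₘ S) ≫ m

/-- The right adjoint morphism `ad' = m(m ⊗ Id)(σ ⊗ Id)(Id ⊗ (S ⊗ Id)Δ) : A ⊗ A ⟶ A`. -/
def adOf' {A : C} (m : A ⊗ A ⟶ A) (Δ : A ⟶ A ⊗ A) (S : A ⟶ A) : A ⊗ A ⟶ A :=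
  (A ◁ (Δ ≫ (S ▷ A))) ≫ (α_ A A A).inv ≫ ((β_ A A).hom ▷ A) ≫ (m ▷ A) ≫ m

/-- The adjoint morphism `ad_H` of a Hopf monoid. -/
def hAd (H : Hopf C) : hCar H ⊗ hCar H ⟶ hCar H := adOf (hMul H) (hComul H) (hS H)

/-- The right adjoint morphism `ad'_H` of a Hopf monoid. -/
def hAd' (H : Hopf C) : hCar H ⊗ hCar H ⟶ hCar H := adOf' (hMul H) (hComul H) (hS H)

/-- A monomorphism `i : K ⟶ A` in `Hopf_coc(M)` is (left) normal if there is
`ψ : A ⊗ K ⟶ K` with `i ∘ ψ = ad_A ∘ (Id_A ⊗ i)`. -/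
def IsLeftNormal {K A : HopfCoc C} (i : K ⟶ A) : Prop :=
  ∃ ψ : hCar A.obj ⊗ hCar K.obj ⟶ hCar K.obj,
    ψ ≫ uhom i = (hCar A.obj ◁ uhom i) ≫ hAd A.obj

/-- A monomorphism `i : K ⟶ A` in `Hopf_coc(M)` is right normal if there is
`ψ' : K ⊗ A ⟶ K` with `i ∘ ψ' = ad'_A ∘ (i ⊗ Id_A)`. -/
def IsRightNormal {K A : HopfCoc C} (i : K ⟶ A) : Prop :=
  ∃ ψ' : hCar K.obj ⊗ hCar A.obj ⟶ hCar K.obj,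
    ψ' ≫ uhom i = (uhom i ▷ hCar A.obj) ≫ hAd' A.obj

end Adjoint

/-!
In a cocommutative Hopf monoid the antipode is an involution: `S * S² = ε η` in the convolution
monoid because `S` is a comonoid morphism, so `S²` and `id` are both convolution inverses of `S`.
With `S² = id` and `Δ S = (S ⊗ S) Δ`, the right adjoint action is the left one precomposed with
the antipode, `ad'(x ⊗ a) = ad(S a ⊗ x)`, and conversely `ad(a ⊗ x) = ad'(x ⊗ S a)`.
Hence a factorisation `ψ` of `ad` through `i` gives the factorisation `ψ ∘ (S ⊗ id) ∘ σ` of `ad'`,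
and vice versa.
-/

section Cocommutative
variable [SymmetricCategory C]

theorem braiding_tensor_right_comp_whiskerLeft_braiding (X Y Z : C) :
    (β_ X (Y ⊗ Z)).hom ≫ (α_ Y Z X).hom ≫ (Y ◁ (β_ Z X).hom) ≫ (α_ Y X Z).inv =
      (α_ X Y Z).inv ≫ ((β_ X Y).hom ▷ Z) := by
  rw [BraidedCategory.braiding_tensor_right_hom]
  simp [← MonoidalCategory.whiskerLeft_comp_assoc]

variable {A : Hopf C}

theorem IsCocomm.antipode_comul (hc : IsCocomm A) :
    hS A ≫ hComul A = hComul A ≫ (hS A ⊗ₘ hS A) := by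
  rw [HopfObj.antipode_comul, reassoc_of% hc]

theorem IsCocomm.antipode_comp_antipode (hc : IsCocomm A) : hS A ≫ hS A = 𝟙 (hCar A) := by
  have id_mul_antipode :
      hComul A ≫ (𝟙 (hCar A) ▷ hCar A) ≫ (hCar A ◁ hS A) ≫ hMul A = hCounit A ≫ hOne A := by
    simp
  have antipode_mul_antipode_sq :
      hComul A ≫ (hS A ▷ hCar A) ≫ (hCar A ◁ (hS A ≫ hS A)) ≫ hMul A = hCounit A ≫ hOne A :=
    calc _ = hS A ≫ hComul A ≫ (hCar A ◁ hS A) ≫ hMul A := by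
          rw [reassoc_of% hc.antipode_comul, MonoidalCategory.whiskerLeft_comp_assoc,
            tensorHom_def_assoc]
      _ = hCounit A ≫ hOne A := by
          rw [HopfObj.antipode_right, HopfObj.antipode_counit_assoc]
  exact (left_inv_eq_right_inv (M := Conv (hCar A) (hCar A))
    id_mul_antipode antipode_mul_antipode_sq).symm

theorem IsCocomm.hAd'_eq (hc : IsCocomm A) :
    hAd' A = (β_ (hCar A) (hCar A)).hom ≫ (hS A ▷ hCar A) ≫ hAd A := by
  have antipode_sq_cancel :
      (hS A ▷ hCar A) ≫ (hComul A ▷ hCar A) ≫ (α_ _ _ _).hom ≫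
          (hCar A ◁ (β_ (hCar A) (hCar A)).hom) ≫ (α_ _ _ _).inv ≫ (hMul A ⊗ₘ hS A) =
        ((hComul A ≫ (hS A ▷ hCar A)) ▷ hCar A) ≫ (α_ _ _ _).hom ≫
          (hCar A ◁ (β_ (hCar A) (hCar A)).hom) ≫ (α_ _ _ _).inv ≫ (hMul A ▷ hCar A) := by
    rw [← comp_whiskerRight_assoc, hc.antipode_comul, MonoidalCategory.tensorHom_def]
    simp only [comp_whiskerRight, Category.assoc]
    rw [associator_naturality_middle_assoc, ← MonoidalCategory.whiskerLeft_comp_assoc,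
      BraidedCategory.braiding_naturality_left, MonoidalCategory.whiskerLeft_comp_assoc,
      associator_inv_naturality_right_assoc, MonoidalCategory.tensorHom_def',
      ← MonoidalCategory.whiskerLeft_comp_assoc, hc.antipode_comp_antipode,
      MonoidalCategory.whiskerLeft_id, Category.id_comp]
  simp only [hAd, hAd', adOf, adOf']
  rw [reassoc_of% antipode_sq_cancel, ← BraidedCategory.braiding_naturality_right_assoc,
    reassoc_of% braiding_tensor_right_comp_whiskerLeft_braiding]

theorem IsCocomm.hAd_eq (hc : IsCocomm A) :
    hAd A = (β_ (hCar A) (hCar A)).hom ≫ (hCar A ◁ hS A) ≫ hAd' A := by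
  rw [hc.hAd'_eq, BraidedCategory.braiding_naturality_right_assoc,
    SymmetricCategory.symmetry_assoc, ← comp_whiskerRight_assoc, hc.antipode_comp_antipode,
    id_whiskerRight, Category.id_comp]

end Cocommutative

section Normal
variable [SymmetricCategory C] {K A : HopfCoc C} {i : K ⟶ A}

theorem IsLeftNormal.isRightNormal (h : IsLeftNormal i) : IsRightNormal i := by
  obtain ⟨ψ, hψ⟩ := h
  refine ⟨(β_ (hCar K.obj) (hCar A.obj)).hom ≫ (hS A.obj ▷ hCar K.obj) ≫ ψ, ?_⟩
  rw [Category.assoc, Category.assoc, hψ, A.2.hAd'_eq,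
    BraidedCategory.braiding_naturality_left_assoc, whisker_exchange_assoc]

theorem IsRightNormal.isLeftNormal (h : IsRightNormal i) : IsLeftNormal i := by
  obtain ⟨ψ', hψ'⟩ := h
  refine ⟨(β_ (hCar A.obj) (hCar K.obj)).hom ≫ (hCar K.obj ◁ hS A.obj) ≫ ψ', ?_⟩
  rw [Category.assoc, Category.assoc, hψ', A.2.hAd_eq, whisker_exchange_assoc,
    ← BraidedCategory.braiding_naturality_right_assoc]

end Normal

/-- **Statement 15.** In a symmetric monoidal category with equalizers and coequalizers
preserved by tensoring, a monomorphism `i : K ⟶ A` in `Hopf_coc(M)` is left normal if and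
only if it is right normal. -/
theorem leftNormal_iff_rightNormal
    [SymmetricCategory C] [HasEqualizers C] [HasCoequalizers C]
    [∀ X : C, PreservesLimitsOfShape WalkingParallelPair (tensorLeft X)]
    [∀ X : C, PreservesLimitsOfShape WalkingParallelPair (tensorRight X)]
    [∀ X : C, PreservesColimitsOfShape WalkingParallelPair (tensorLeft X)]
    [∀ X : C, PreservesColimitsOfShape WalkingParallelPair (tensorRight X)]
    (K A : HopfCoc C) (i : K ⟶ A) (hi : Mono i) :
    IsLeftNormal i ↔ IsRightNormal i :=
  ⟨IsLeftNormal.isRightNormal, IsRightNormal.isLeftNormal⟩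

end HopfSemiabelian
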